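/- Let a = (a_1, …, a_d) be a probability vector with all a_i > 0, let n_1, …, n_d be nonnegative integers with ∑_{i=1}^d n_i = n ≥ 1, and let P = (n_1/n, …, n_d/n). Then (n+1)^{−d} · exp(−n·D(P‖a)) ≤ ( n! / (n_1!·n_2!·…·n_d!) ) · ∏_{i=1}^d a_i^{n_i} ≤ exp(−n·D(P‖a)). -/

import Mathlib

open Finset

/-- Relative entropy `D(P‖a)` (natural logarithm, `0 * log 0 = 0`). -/
noncomputable def relativeEntropy {d : ℕ} (b a : Fin d → ℝ) : ℝ :=
  ∑ i, b i * (Real.log (b i) - Real.log (a i))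

lemma fac_le_aux : ∀ (k m : ℕ), (m + k).factorial ≤ m.factorial * (m + k) ^ k
  | 0, m => by simp
  | k+1, m => by
    calc (m + (k+1)).factorial = (m + k + 1) * (m + k).factorial := by
          rw [← Nat.add_assoc, Nat.factorial_succ]
      _ ≤ (m + k + 1) * (m.factorial * (m + k) ^ k) :=
          Nat.mul_le_mul_left _ (fac_le_aux k m)
      _ ≤ (m + k + 1) * (m.factorial * (m + k + 1) ^ k) := by
          exact Nat.mul_le_mul_left _ (Nat.mul_le_mul_left _
            (Nat.pow_le_pow_left (Nat.le_succ _) _))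
      _ = m.factorial * (m + (k+1)) ^ (k+1) := by ring

lemma key_lemma (l m : ℕ) : l.factorial * l ^ m ≤ m.factorial * l ^ l := by
  rcases le_total l m with h | h
  · calc l.factorial * l ^ m = l.factorial * l ^ (m - l) * l ^ l := by
          rw [mul_assoc, ← pow_add, Nat.sub_add_cancel h]
      _ ≤ m.factorial * l ^ l :=
          Nat.mul_le_mul_right _ (Nat.factorial_mul_pow_sub_le_factorial h)
  · calc l.factorial * l ^ m ≤ m.factorial * l ^ (l - m) * l ^ m := by
          have := fac_le_aux (l - m) m
          rw [Nat.add_sub_cancel' h] at this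
          exact Nat.mul_le_mul_right _ this
      _ = m.factorial * l ^ l := by rw [mul_assoc, ← pow_add, Nat.sub_add_cancel h]

lemma type_max {d n : ℕ} (nv k : Fin d → ℕ) (hnv : ∑ i, nv i = n) (hk : ∑ i, k i = n) :
    Nat.multinomial univ k * ∏ i, nv i ^ k i ≤ Nat.multinomial univ nv * ∏ i, nv i ^ nv i := by
  have h1 : (∏ i, (k i).factorial) * Nat.multinomial univ k = n.factorial := by
    rw [Nat.multinomial_spec, hk]
  have h2 : (∏ i, (nv i).factorial) * Nat.multinomial univ nv = n.factorial := by
    rw [Nat.multinomial_spec, hnv]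
  have hkey : ∏ i, ((nv i).factorial * nv i ^ k i) ≤ ∏ i, ((k i).factorial * nv i ^ nv i) :=
    Finset.prod_le_prod' fun i _ => key_lemma (nv i) (k i)
  have hc : 0 < (∏ i, (k i).factorial) * ∏ i, (nv i).factorial := by positivity
  refine Nat.le_of_mul_le_mul_right ?_ hc
  calc Nat.multinomial univ k * (∏ i, nv i ^ k i) *
        ((∏ i, (k i).factorial) * ∏ i, (nv i).factorial)
      = n.factorial * ∏ i, ((nv i).factorial * nv i ^ k i) := by
        rw [Finset.prod_mul_distrib, ← h1]; ring
    _ ≤ n.factorial * ∏ i, ((k i).factorial * nv i ^ nv i) := Nat.mul_le_mul_left _ hkey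
    _ = Nat.multinomial univ nv * (∏ i, nv i ^ nv i) *
        ((∏ i, (k i).factorial) * ∏ i, (nv i).factorial) := by
        rw [Finset.prod_mul_distrib, ← h2]; ring

theorem stmt_18 {d : ℕ} (a : Fin d → ℝ) (ha : ∀ i, 0 < a i) (hsum : ∑ i, a i = 1)
    (nv : Fin d → ℕ) (n : ℕ) (hn : 1 ≤ n) (hnv : ∑ i, nv i = n) :
    ((n + 1 : ℕ) : ℝ) ^ (-(d : ℤ)) *
        Real.exp (-(n : ℝ) * relativeEntropy (fun i => (nv i : ℝ) / n) a) ≤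
      ((n.factorial : ℝ) / ∏ i, ((nv i).factorial : ℝ)) * ∏ i, a i ^ (nv i) ∧
    ((n.factorial : ℝ) / ∏ i, ((nv i).factorial : ℝ)) * ∏ i, a i ^ (nv i) ≤
      Real.exp (-(n : ℝ) * relativeEntropy (fun i => (nv i : ℝ) / n) a) := by
  have hn0 : (0:ℝ) < n := by exact_mod_cast hn
  set P : Fin d → ℝ := fun i => (nv i : ℝ) / n with hP
  have hPnn : ∀ i, 0 ≤ P i := fun i => by positivity
  have hcast : ∑ i, ((nv i : ℝ)) = (n : ℝ) := by exact_mod_cast congrArg Nat.cast hnv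
  have hPsum : ∑ i, P i = 1 := by
    simp only [hP, ← Finset.sum_div, hcast, div_self hn0.ne']
  -- exp identity
  have hexpi : ∀ i, Real.exp ((nv i : ℝ) * (Real.log (a i) - Real.log (P i)))
      = a i ^ nv i / P i ^ nv i := by
    intro i
    rcases Nat.eq_zero_or_pos (nv i) with h | h
    · simp [h]
    · have hPpos : 0 < P i := by
        have : (0:ℝ) < nv i := by exact_mod_cast h
        positivity
      rw [mul_comm, Real.exp_mul, Real.exp_sub, Real.exp_log (ha i), Real.exp_log hPpos,
        Real.rpow_natCast]
      exact div_pow _ _ _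
  have hexp : Real.exp (-(n : ℝ) * relativeEntropy P a)
      = (∏ i, a i ^ nv i) / ∏ i, P i ^ nv i := by
    have : -(n : ℝ) * relativeEntropy P a
        = ∑ i, (nv i : ℝ) * (Real.log (a i) - Real.log (P i)) := by
      rw [relativeEntropy, Finset.mul_sum]
      refine Finset.sum_congr rfl fun i _ => ?_
      have hnP : (n : ℝ) * P i = (nv i : ℝ) := by
        simp only [hP]; field_simp [hn0.ne']
      rw [← hnP]; ring
    rw [this, Real.exp_sum]
    rw [Finset.prod_congr rfl fun i _ => hexpi i, Finset.prod_div_distrib]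
  have hprodP : 0 < ∏ i, P i ^ nv i := by
    refine Finset.prod_pos fun i _ => ?_
    rcases Nat.eq_zero_or_pos (nv i) with h | h
    · simp [h]
    · have : (0:ℝ) < nv i := by exact_mod_cast h
      have : 0 < P i := by positivity
      positivity
  -- multinomial coefficient
  have hfacpos : (0:ℝ) < ∏ i, ((nv i).factorial : ℝ) := by positivity
  have hspec : (∏ i, (nv i).factorial) * Nat.multinomial univ nv = n.factorial := by
    rw [Nat.multinomial_spec, hnv]
  have hCval : ((n.factorial :ℝ) / ∏ i, ((nv i).factorial : ℝ))
      = (Nat.multinomial univ nv : ℝ) := by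
    rw [div_eq_iff hfacpos.ne', mul_comm]
    exact_mod_cast (congrArg (Nat.cast (R := ℝ)) hspec).symm
  set T : ℝ := (Nat.multinomial univ nv : ℝ) * ∏ i, P i ^ nv i with hT
  set S := Finset.piAntidiag (univ : Finset (Fin d)) n with hS
  have hmem : nv ∈ S := by simp [hS, mem_piAntidiag, hnv]
  have hsum1 : ∑ k ∈ S, (Nat.multinomial univ k : ℝ) * ∏ i, P i ^ k i = 1 := by
    rw [← Finset.sum_pow_eq_sum_piAntidiag, hPsum, one_pow]
  have hterm_nn : ∀ k ∈ S, 0 ≤ (Nat.multinomial univ k : ℝ) * ∏ i, P i ^ k i := by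
    intro k _
    have : 0 ≤ ∏ i, P i ^ k i := Finset.prod_nonneg fun i _ => pow_nonneg (hPnn i) _
    positivity
  -- upper bound T ≤ 1
  have hTle1 : T ≤ 1 := by
    rw [← hsum1]
    exact Finset.single_le_sum hterm_nn hmem
  -- each term ≤ T
  have hPk : ∀ k : Fin d → ℕ, (∑ i, k i = n) →
      ∏ i, P i ^ k i = (∏ i, (nv i : ℝ) ^ k i) / (n:ℝ)^n := by
    intro k hk
    simp only [hP, div_pow]
    rw [Finset.prod_div_distrib, Finset.prod_pow_eq_pow_sum, hk]
  have hterm_le : ∀ k ∈ S, (Nat.multinomial univ k : ℝ) * ∏ i, P i ^ k i ≤ T := by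
    intro k hkS
    rw [hS, mem_piAntidiag] at hkS
    have hk : ∑ i, k i = n := hkS.1
    have hnat := type_max nv k hnv hk
    have hnat' : (Nat.multinomial univ k : ℝ) * ∏ i, (nv i:ℝ) ^ k i
        ≤ (Nat.multinomial univ nv : ℝ) * ∏ i, (nv i:ℝ) ^ nv i := by exact_mod_cast hnat
    rw [hPk k hk, hT, hPk nv hnv, ← mul_div_assoc, ← mul_div_assoc]
    exact (div_le_div_iff_of_pos_right (by positivity : (0:ℝ) < (n:ℝ)^n)).mpr hnat'
  -- card bound
  have hcard : S.card ≤ (n+1)^d := by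
    have hsub : S ⊆ Fintype.piFinset fun _ : Fin d => Finset.range (n+1) := by
      intro k hk
      rw [hS, mem_piAntidiag] at hk
      rw [Fintype.mem_piFinset]
      intro i
      rw [Finset.mem_range]
      have : k i ≤ n := hk.1 ▸ Finset.single_le_sum (fun j _ => Nat.zero_le (k j)) (mem_univ i)
      omega
    calc S.card ≤ _ := Finset.card_le_card hsub
      _ = (n+1)^d := by simp [Fintype.card_piFinset]
  have hTnn : 0 ≤ T := hterm_nn nv hmem
  have h1le : (1:ℝ) ≤ ((n+1)^d : ℕ) * T := by
    have hs := Finset.sum_le_card_nsmul S _ T hterm_le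
    rw [hsum1] at hs
    have h2 : (S.card : ℝ) * T ≤ ((n+1)^d : ℕ) * T := by
      apply mul_le_mul_of_nonneg_right _ hTnn
      exact_mod_cast hcard
    calc (1:ℝ) ≤ S.card • T := hs
      _ = (S.card : ℝ) * T := nsmul_eq_mul _ _
      _ ≤ _ := h2
  have hpow : (0:ℝ) < ((n + 1 : ℕ) : ℝ) ^ d := by positivity
  have hTlb : ((n + 1 : ℕ) : ℝ) ^ (-(d : ℤ)) ≤ T := by
    have he : ((n + 1 : ℕ) : ℝ) ^ (-(d : ℤ)) = (((n + 1 : ℕ) : ℝ) ^ d)⁻¹ := by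
      rw [zpow_neg, zpow_natCast]
    rw [he, inv_eq_one_div, div_le_iff₀ hpow]
    have : (((n+1)^d : ℕ) : ℝ) = ((n + 1 : ℕ) : ℝ) ^ d := by push_cast; ring
    rw [this] at h1le
    linarith
  have hgoal_eq : ((n.factorial : ℝ) / ∏ i, ((nv i).factorial : ℝ)) * ∏ i, a i ^ nv i
      = T * Real.exp (-(n : ℝ) * relativeEntropy P a) := by
    rw [hCval, hexp, hT]
    field_simp
  refine ⟨?_, ?_⟩
  · rw [hgoal_eq]
    exact mul_le_mul_of_nonneg_right hTlb (Real.exp_pos _).le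
  · rw [hgoal_eq]
    calc T * Real.exp (-(n : ℝ) * relativeEntropy P a)
        ≤ 1 * Real.exp (-(n : ℝ) * relativeEntropy P a) :=
          mul_le_mul_of_nonneg_right hTle1 (Real.exp_pos _).le
      _ = _ := one_mul _
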